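/- arXiv:2310.17637 — 2 statements merged into one kernel-verified Lean document; each statement's English description precedes it below -/
import Mathlib

section
/- (One-dimensional high-order positivity theorem.) Fix n_q ≥ 1. Suppose given: interior quadrature states y_q ∈ 𝒢 for q = 1, …, n_q; interior trace states y_L, y_R ∈ 𝒢 and exterior (neighbor) trace states z_L, z_R ∈ 𝒢 at the left and right endpoints, each with all concentration components strictly positive; mass-conserving normal viscous fluxes G_L, G_R (evaluated from the interior traces) and H_L, H_R (evaluated from the exterior traces), where fluxes with subscript L (resp. R) have been contracted with the outward unit normal n = −1 (resp. n = +1); coefficients θ_q ≥ 0, θ_L > 0, θ_R > 0 with Σ_q θ_q + θ_L + θ_R = 1; dissipation coefficients β_L > max{β*(y_L, G_L), β*(z_L, H_L)} and β_R > max{β*(y_R, G_R), β*(z_R, H_R)}; and a ratio τ = Δt*/h > 0 with τ ≤ min{θ_L/β_L, θ_R/β_R}. Then the updated element average ȳ_v := Σ_q θ_q y_q + θ_L y_L + θ_R y_R + τ·[ (G_L + H_L)/2 + (G_R + H_R)/2 − (β_L/2)(y_L − z_L) − (β_R/2)(y_R − z_R) ] belongs to 𝒢. -/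
open scoped BigOperators

namespace PaperStmt

noncomputable section

abbrev State (d ns : ℕ) : Type := (Fin d → ℝ) × ℝ × (Fin ns → ℝ)

variable {d ns : ℕ}

/-- Euclidean dot product of momentum-like vectors. -/
def dotP (a b : Fin d → ℝ) : ℝ := ∑ k, a k * b k

/-- Squared Euclidean norm. -/
def normSq (a : Fin d → ℝ) : ℝ := ∑ k, a k ^ 2

/-- Density `ρ(y) = Σ_i W_i C_i`. -/
def rho (W : Fin ns → ℝ) (y : State d ns) : ℝ := ∑ i, W i * y.2.2 i

/-- Scaled shifted internal energy `Z(y) = ρ(y)·E − |m|²/2 − ρ(y)²·u0`. -/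
def Z (W : Fin ns → ℝ) (u0 : ℝ) (y : State d ns) : ℝ :=
  rho W y * y.2.1 - normSq y.1 / 2 - rho W y ^ 2 * u0

/-- The admissible set `𝒢`. -/
def Gset (W : Fin ns → ℝ) (u0 : ℝ) : Set (State d ns) :=
  {y | (∀ i, 0 ≤ y.2.2 i) ∧ 0 < rho W y ∧ 0 < Z W u0 y}

/-- Mass production of a normal viscous flux: `M(G) = Σ_i W_i G_{C,i}`. -/
def Mflux (W : Fin ns → ℝ) (G : State d ns) : ℝ := ∑ i, W i * G.2.2 i

/-- `b(y,G) = ρ(y)·G_E − m·G_m`. -/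
def bCoef (W : Fin ns → ℝ) (y G : State d ns) : ℝ :=
  rho W y * G.2.1 - dotP y.1 G.1

/-- `β_T(y,G) = (|b| + √(b² + 2 Z(y) |G_m|²)) / (2 Z(y))`. -/
def betaT (W : Fin ns → ℝ) (u0 : ℝ) (y G : State d ns) : ℝ :=
  (|bCoef W y G| + Real.sqrt (bCoef W y G ^ 2 + 2 * Z W u0 y * normSq G.1)) /
    (2 * Z W u0 y)

/-- `β*(y,G) = max{ max_i |G_{C,i}|/C_i , β_T(y,G) }`. -/
def betaStar (W : Fin ns → ℝ) (u0 : ℝ) (y G : State d ns) : ℝ :=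
  max (⨆ i, |G.2.2 i| / y.2.2 i) (betaT W u0 y G)


/-!
`𝒢` is a convex cone not containing `0`. Closure under positive scaling is the homogeneity of
`ρ` and `Z`; closure under addition is the superadditivity of `Z` on `𝒢`, read off from
`ρ(y) ρ(z) (Z(y+z) - Z(y) - Z(z)) = ρ(z)² Z(y) + ρ(y)² Z(z) + |ρ(z) m_y - ρ(y) m_z|² / 2`.

A mass-conserving flux `G` does not change `ρ`, so
`Z(y + G/β) = Z(y) + b/β - |G_m|²/(2β²)`, which is positive once `β` exceeds the larger root
`β_T` of `2 Z x² - 2 |b| x - |G_m|²`; the concentrations of `y + G/β` stay nonnegative once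
`β > max_i |G_{C,i}|/C_i`. Hence `y + G/β ∈ 𝒢` for `β > β*(y,G)`.

Each endpoint contribution `θ y + τ ((G + H)/2 - (β/2)(y - z))` equals
`(θ - τβ) y + (τβ/2)(z + H/β) + (τβ/2)(y + G/β)`, and `θ - τβ ≥ 0` by the time-step
constraint. So `ȳ_v` is a nonnegative combination of points of `𝒢` in which some coefficient
is positive.
-/

section InsertZero

variable {R E : Type*} [Semiring R] [PartialOrder R] [IsOrderedRing R] [AddCommMonoid E]
  [Module R E] {C : ConvexCone R E} {x y : E}

def _root_.ConvexCone.insertZero (C : ConvexCone R E) : PointedCone R E where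
  carrier := insert 0 C
  add_mem' := by
    rintro x y (rfl | hx) (rfl | hy)
    · exact Or.inl (add_zero 0)
    · simpa using Or.inr hy
    · simpa using Or.inr hx
    · exact Or.inr (C.add_mem hx hy)
  zero_mem' := Set.mem_insert _ _
  smul_mem' := by
    rintro ⟨c, hc⟩ x (rfl | hx)
    · exact Or.inl (smul_zero _)
    · rcases hc.eq_or_lt with rfl | hc
      · exact Or.inl (zero_smul R x)
      · exact Or.inr (C.smul_mem hc hx)

lemma _root_.ConvexCone.mem_insertZero_of_mem (hx : x ∈ C) : x ∈ C.insertZero := Or.inr hx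

lemma _root_.ConvexCone.add_mem_of_mem_insertZero (hx : x ∈ C.insertZero) (hy : y ∈ C) :
    x + y ∈ C := by
  rcases hx with rfl | hx
  · simpa using hy
  · exact C.add_mem hx hy

end InsertZero

section Admissible

lemma normSq_nonneg (a : Fin d → ℝ) : 0 ≤ normSq a :=
  Finset.sum_nonneg fun _ _ => sq_nonneg _

lemma normSq_add_smul (s t : ℝ) (a b : Fin d → ℝ) :
    normSq (s • a + t • b) = s ^ 2 * normSq a + 2 * (s * t) * dotP a b + t ^ 2 * normSq b := by
  simp only [normSq, dotP, Pi.add_apply, Pi.smul_apply, smul_eq_mul, Finset.mul_sum,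
    ← Finset.sum_add_distrib]
  exact Finset.sum_congr rfl fun k _ => by ring

lemma rho_add (W : Fin ns → ℝ) (y z : State d ns) : rho W (y + z) = rho W y + rho W z := by
  simp only [rho, Prod.snd_add, Pi.add_apply, mul_add, Finset.sum_add_distrib]

lemma rho_smul (W : Fin ns → ℝ) (t : ℝ) (y : State d ns) : rho W (t • y) = t * rho W y := by
  simp only [rho, Prod.smul_snd, Pi.smul_apply, smul_eq_mul, Finset.mul_sum, mul_left_comm]

lemma Z_smul (W : Fin ns → ℝ) (u0 t : ℝ) (y : State d ns) :
    Z W u0 (t • y) = t ^ 2 * Z W u0 y := by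
  have h := normSq_add_smul t 0 y.1 y.1
  simp only [zero_smul, add_zero] at h
  simp only [Z, rho_smul, Prod.smul_fst, Prod.smul_snd, smul_eq_mul, h]
  ring

lemma rho_mul_rho_mul_Z_add_sub (W : Fin ns → ℝ) (u0 : ℝ) (y z : State d ns) :
    rho W y * rho W z * (Z W u0 (y + z) - Z W u0 y - Z W u0 z)
      = rho W z ^ 2 * Z W u0 y + rho W y ^ 2 * Z W u0 z
        + normSq (rho W z • y.1 + (-rho W y) • z.1) / 2 := by
  have h := normSq_add_smul 1 1 y.1 z.1
  simp only [one_smul] at h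
  simp only [Z, rho_add, Prod.fst_add, Prod.snd_add, h, normSq_add_smul]
  ring

variable {W : Fin ns → ℝ} {u0 : ℝ}

lemma Z_add_Z_le_Z_add {y z : State d ns} (hρy : 0 < rho W y) (hρz : 0 < rho W z)
    (hZy : 0 ≤ Z W u0 y) (hZz : 0 ≤ Z W u0 z) : Z W u0 y + Z W u0 z ≤ Z W u0 (y + z) := by
  have key := rho_mul_rho_mul_Z_add_sub W u0 y z
  have : 0 ≤ rho W y * rho W z * (Z W u0 (y + z) - Z W u0 y - Z W u0 z) := by
    rw [key]; have := normSq_nonneg (rho W z • y.1 + (-rho W y) • z.1); positivity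
  linarith [(mul_nonneg_iff_of_pos_left (mul_pos hρy hρz)).mp this]

lemma add_mem_Gset {y z : State d ns} (hy : y ∈ Gset W u0) (hz : z ∈ Gset W u0) :
    y + z ∈ Gset W u0 := by
  obtain ⟨hCy, hρy, hZy⟩ := hy
  obtain ⟨hCz, hρz, hZz⟩ := hz
  refine ⟨fun i => add_nonneg (hCy i) (hCz i), ?_, ?_⟩
  · rw [rho_add]; exact add_pos hρy hρz
  · linarith [Z_add_Z_le_Z_add hρy hρz hZy.le hZz.le]

lemma smul_mem_Gset {t : ℝ} (ht : 0 < t) {y : State d ns} (hy : y ∈ Gset W u0) :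
    t • y ∈ Gset W u0 := by
  obtain ⟨hC, hρ, hZ⟩ := hy
  refine ⟨fun i => mul_nonneg ht.le (hC i), ?_, ?_⟩
  · rw [rho_smul]; exact mul_pos ht hρ
  · rw [Z_smul]; positivity

variable (W u0 d) in
def admissibleCone : ConvexCone ℝ (State d ns) where
  carrier := Gset W u0
  smul_mem' _ ht _ hy := smul_mem_Gset ht hy
  add_mem' _ hy _ hz := add_mem_Gset hy hz

end Admissible

section ViscousShift

variable {W : Fin ns → ℝ} {u0 : ℝ}

lemma betaT_nonneg {y : State d ns} (hZ : 0 ≤ Z W u0 y) (G : State d ns) :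
    0 ≤ betaT W u0 y G :=
  div_nonneg (add_nonneg (abs_nonneg _) (Real.sqrt_nonneg _)) (by linarith)

lemma pos_of_betaStar_lt {y G : State d ns} (hy : y ∈ Gset W u0) {β : ℝ}
    (hβ : betaStar W u0 y G < β) : 0 < β :=
  (betaT_nonneg hy.2.2.le G).trans_lt ((le_max_right _ _).trans_lt hβ)

lemma Z_add_smul_of_rho_eq_zero (y : State d ns) {G : State d ns} (hG : rho W G = 0) (t : ℝ) :
    Z W u0 (y + t • G) = Z W u0 y + t * bCoef W y G - t ^ 2 * normSq G.1 / 2 := by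
  have h := normSq_add_smul 1 t y.1 G.1
  simp only [one_smul] at h
  simp only [Z, bCoef, rho_add, rho_smul, hG, Prod.fst_add, Prod.snd_add, Prod.smul_fst,
    Prod.smul_snd, smul_eq_mul, h]
  ring

lemma quadratic_pos_of_root_lt {a b S β : ℝ} (ha : 0 < a) (hS : 0 ≤ S)
    (h : (|b| + √(b ^ 2 + 2 * a * S)) / (2 * a) < β) :
    0 < 2 * a * β ^ 2 - 2 * |b| * β - S := by
  have hD : 0 ≤ b ^ 2 + 2 * a * S := by positivity
  have hroot : √(b ^ 2 + 2 * a * S) < 2 * a * β - |b| := by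
    rw [div_lt_iff₀ (by positivity)] at h; linarith
  have hsq : b ^ 2 + 2 * a * S < (2 * a * β - |b|) ^ 2 := by
    calc b ^ 2 + 2 * a * S = √(b ^ 2 + 2 * a * S) ^ 2 := (Real.sq_sqrt hD).symm
      _ < _ := pow_lt_pow_left₀ hroot (Real.sqrt_nonneg _) two_ne_zero
  have : 0 < 2 * a * (2 * a * β ^ 2 - 2 * |b| * β - S) := by nlinarith [sq_abs b]
  exact pos_of_mul_pos_right this (by positivity)

lemma Z_add_inv_smul_pos {y G : State d ns} (hy : y ∈ Gset W u0) (hG : rho W G = 0) {β : ℝ}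
    (hβ : betaT W u0 y G < β) : 0 < Z W u0 (y + β⁻¹ • G) := by
  have hβ0 : 0 < β := (betaT_nonneg hy.2.2.le G).trans_lt hβ
  have hq := quadratic_pos_of_root_lt hy.2.2 (normSq_nonneg G.1) hβ
  have hb : -|bCoef W y G| * β ≤ bCoef W y G * β :=
    mul_le_mul_of_nonneg_right (neg_abs_le _) hβ0.le
  have : Z W u0 (y + β⁻¹ • G) * (2 * β ^ 2)
      = 2 * Z W u0 y * β ^ 2 + 2 * bCoef W y G * β - normSq G.1 := by
    rw [Z_add_smul_of_rho_eq_zero y hG]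
    field_simp
  exact pos_of_mul_pos_left (by rw [this]; linarith) (by positivity)

lemma conc_add_inv_smul_nonneg {y G : State d ns} (hC : ∀ i, 0 < y.2.2 i) {β : ℝ}
    (hβ : (⨆ i, |G.2.2 i| / y.2.2 i) < β) (i : Fin ns) : 0 ≤ (y + β⁻¹ • G).2.2 i := by
  have hi : |G.2.2 i| < β * y.2.2 i :=
    (div_lt_iff₀ (hC i)).mp ((le_ciSup (Finite.bddAbove_range _) i).trans_lt hβ)
  have hβ0 : 0 < β := pos_of_mul_pos_left ((abs_nonneg _).trans_lt hi) (hC i).le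
  have : 0 ≤ β * (y + β⁻¹ • G).2.2 i := by
    simp only [Prod.snd_add, Prod.smul_snd, Pi.add_apply, Pi.smul_apply, smul_eq_mul, mul_add,
      mul_inv_cancel_left₀ hβ0.ne']
    linarith [neg_abs_le (G.2.2 i)]
  exact nonneg_of_mul_nonneg_right this hβ0

lemma add_inv_smul_mem_Gset {y G : State d ns} (hy : y ∈ Gset W u0) (hC : ∀ i, 0 < y.2.2 i)
    (hG : Mflux W G = 0) {β : ℝ} (hβ : betaStar W u0 y G < β) : y + β⁻¹ • G ∈ Gset W u0 := by
  have hρG : rho W G = 0 := hG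
  refine ⟨conc_add_inv_smul_nonneg hC ((le_max_left _ _).trans_lt hβ), ?_,
    Z_add_inv_smul_pos hy hρG ((le_max_right _ _).trans_lt hβ)⟩
  rw [rho_add, rho_smul, hρG, mul_zero, add_zero]
  exact hy.2.1

end ViscousShift

def endpointUpdate (θ τ β : ℝ) (y z G H : State d ns) : State d ns :=
  θ • y + τ • ((2:ℝ)⁻¹ • (G + H) - (β / 2) • (y - z))

lemma endpointUpdate_eq (θ τ : ℝ) {β : ℝ} (hβ : β ≠ 0) (y z G H : State d ns) :
    endpointUpdate θ τ β y z G H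
      = (θ - τ * β) • y + (τ * β / 2) • (z + β⁻¹ • H) + (τ * β / 2) • (y + β⁻¹ • G) := by
  unfold endpointUpdate
  match_scalars <;> field_simp
  ring

lemma endpointUpdate_mem_Gset {W : Fin ns → ℝ} {u0 : ℝ} {y z G H : State d ns}
    (hy : y ∈ Gset W u0) (hz : z ∈ Gset W u0) (hyC : ∀ i, 0 < y.2.2 i)
    (hzC : ∀ i, 0 < z.2.2 i) (hG : Mflux W G = 0) (hH : Mflux W H = 0) {θ τ β : ℝ}
    (hβ : max (betaStar W u0 y G) (betaStar W u0 z H) < β) (hτ : 0 < τ) (hτθ : τ ≤ θ / β) :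
    endpointUpdate θ τ β y z G H ∈ Gset W u0 := by
  have hβy : betaStar W u0 y G < β := (le_max_left _ _).trans_lt hβ
  have hβz : betaStar W u0 z H < β := (le_max_right _ _).trans_lt hβ
  have hβ0 : 0 < β := pos_of_betaStar_lt hy hβy
  have hw : 0 < τ * β / 2 := by positivity
  have hθ : 0 ≤ θ - τ * β := sub_nonneg.mpr ((le_div_iff₀ hβ0).mp hτθ)
  let K := admissibleCone d W u0
  rw [endpointUpdate_eq θ τ hβ0.ne']
  refine K.add_mem_of_mem_insertZero (add_mem ?_ ?_)
    (K.smul_mem hw (add_inv_smul_mem_Gset hy hyC hG hβy))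
  · exact K.insertZero.smul_mem hθ (K.mem_insertZero_of_mem hy)
  · exact K.mem_insertZero_of_mem (K.smul_mem hw (add_inv_smul_mem_Gset hz hzC hH hβz))

theorem oneD_high_order_positivity_general (W : Fin ns → ℝ) (u0 : ℝ) {nq : ℕ}
    (yq : Fin nq → State d ns) (hyq : ∀ q, yq q ∈ Gset W u0)
    (yL yR zL zR : State d ns)
    (hyL : yL ∈ Gset W u0) (hyR : yR ∈ Gset W u0)
    (hzL : zL ∈ Gset W u0) (hzR : zR ∈ Gset W u0)
    (hyLC : ∀ i, 0 < yL.2.2 i) (hyRC : ∀ i, 0 < yR.2.2 i)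
    (hzLC : ∀ i, 0 < zL.2.2 i) (hzRC : ∀ i, 0 < zR.2.2 i)
    (Gl Gr Hl Hr : State d ns)
    (hGL : Mflux W Gl = 0) (hGR : Mflux W Gr = 0)
    (hHL : Mflux W Hl = 0) (hHR : Mflux W Hr = 0)
    (θq : Fin nq → ℝ) (hθq : ∀ q, 0 ≤ θq q)
    (θL θR : ℝ) (βL βR : ℝ)
    (hβL : max (betaStar W u0 yL Gl) (betaStar W u0 zL Hl) < βL)
    (hβR : max (betaStar W u0 yR Gr) (betaStar W u0 zR Hr) < βR)
    (τ : ℝ) (hτ : 0 < τ) (hτle : τ ≤ min (θL / βL) (θR / βR)) :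
    (∑ q, θq q • yq q) + θL • yL + θR • yR
      + τ • ((2:ℝ)⁻¹ • (Gl + Hl) + (2:ℝ)⁻¹ • (Gr + Hr)
          - (βL / 2) • (yL - zL) - (βR / 2) • (yR - zR)) ∈ Gset W u0 := by
  let K := admissibleCone d W u0
  have hinterior : ∑ q, θq q • yq q ∈ K.insertZero := Submodule.sum_mem _ fun q _ =>
    K.insertZero.smul_mem (hθq q) (K.mem_insertZero_of_mem (hyq q))
  have hleft := endpointUpdate_mem_Gset hyL hzL hyLC hzLC hGL hHL hβL hτ
    (hτle.trans (min_le_left _ _))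
  have hright := endpointUpdate_mem_Gset hyR hzR hyRC hzRC hGR hHR hβR hτ
    (hτle.trans (min_le_right _ _))
  have hsplit : (∑ q, θq q • yq q) + θL • yL + θR • yR
      + τ • ((2:ℝ)⁻¹ • (Gl + Hl) + (2:ℝ)⁻¹ • (Gr + Hr)
          - (βL / 2) • (yL - zL) - (βR / 2) • (yR - zR))
      = (∑ q, θq q • yq q) + endpointUpdate θL τ βL yL zL Gl Hl
        + endpointUpdate θR τ βR yR zR Gr Hr := by
    unfold endpointUpdate; module
  rw [hsplit]
  exact K.add_mem (K.add_mem_of_mem_insertZero hinterior hleft) hright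

/-- one-dimensional high-order positivity theorem
(Theorem `CFL-condition-1D-viscous`): under the time-step-size constraint
`τ = Δt*/h ≤ min{θ_L/β_L, θ_R/β_R}`, the constraints on `β_L, β_R`, and the conditions
on the `θ`'s, the updated element average of the viscous contribution lies in `𝒢`. -/
theorem oneD_high_order_positivity (W : Fin ns → ℝ) (u0 : ℝ) (hW : ∀ i, 0 < W i)
    {nq : ℕ} (hnq : 1 ≤ nq)
    (yq : Fin nq → State d ns) (hyq : ∀ q, yq q ∈ Gset W u0)
    (yL yR zL zR : State d ns)
    (hyL : yL ∈ Gset W u0) (hyR : yR ∈ Gset W u0)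
    (hzL : zL ∈ Gset W u0) (hzR : zR ∈ Gset W u0)
    (hyLC : ∀ i, 0 < yL.2.2 i) (hyRC : ∀ i, 0 < yR.2.2 i)
    (hzLC : ∀ i, 0 < zL.2.2 i) (hzRC : ∀ i, 0 < zR.2.2 i)
    (Gl Gr Hl Hr : State d ns)
    (hGL : Mflux W Gl = 0) (hGR : Mflux W Gr = 0)
    (hHL : Mflux W Hl = 0) (hHR : Mflux W Hr = 0)
    (θq : Fin nq → ℝ) (hθq : ∀ q, 0 ≤ θq q)
    (θL θR : ℝ) (hθL : 0 < θL) (hθR : 0 < θR)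
    (hθsum : (∑ q, θq q) + θL + θR = 1)
    (βL βR : ℝ)
    (hβL : max (betaStar W u0 yL Gl) (betaStar W u0 zL Hl) < βL)
    (hβR : max (betaStar W u0 yR Gr) (betaStar W u0 zR Hr) < βR)
    (τ : ℝ) (hτ : 0 < τ) (hτle : τ ≤ min (θL / βL) (θR / βR)) :
    (∑ q, θq q • yq q) + θL • yL + θR • yR
      + τ • ((2:ℝ)⁻¹ • (Gl + Hl) + (2:ℝ)⁻¹ • (Gr + Hr)
          - (βL / 2) • (yL - zL) - (βR / 2) • (yR - zR)) ∈ Gset W u0 :=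
  oneD_high_order_positivity_general W u0 yq hyq yL yR zL zR hyL hyR hzL hzR hyLC hyRC hzLC hzRC Gl
    Gr Hl Hr hGL hGR hHL hHR θq hθq θL θR βL βR hβL hβR τ hτ hτle

end
end PaperStmt
end

section
/- Let y = (m, E, C) be a state with C_i > 0 for all i and Z(y) > 0, let Δy ∈ ℝ^d × ℝ × ℝ^{n_s}, and let θ > 0 and c > 0 be reals with c·(1 + α*(y, Δy)) < θ. Then the state y − (c/(θ − c))·Δy lies in the admissible set 𝒢 and all of its concentration components are strictly positive. -/
/-!
Along the ray `t ↦ y - tΔy` the concentrations are affine in `t` and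
`Z(y - tΔy) = Z + t b + t² g`, which for `s = 1/t` is `t² (Z s² + b s + g)`; the larger root of
the latter is `α_T`. Hence `t α* < 1`, which is what `c (1 + α*) < θ` says for `t = c/(θ - c)`,
keeps every `C_i` and `Z` positive, and `ρ > 0` follows from the positive concentrations.
-/

open scoped BigOperators

namespace PaperStmt

noncomputable section

variable {d ns : ℕ}

/-- `b(y,Δy) = −E·M(Δy) − ρ(y)·ΔE + m·Δm + 2 ρ(y) u0 M(Δy)` for a perturbation `Δy`. -/
def bPert (W : Fin ns → ℝ) (u0 : ℝ) (y dy : State d ns) : ℝ :=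
  -(y.2.1 * Mflux W dy) - rho W y * dy.2.1 + dotP y.1 dy.1
    + 2 * rho W y * u0 * Mflux W dy

/-- `g(y,Δy) = M(Δy)·ΔE − |Δm|²/2 − u0·M(Δy)²`. -/
def gPert (W : Fin ns → ℝ) (u0 : ℝ) (dy : State d ns) : ℝ :=
  Mflux W dy * dy.2.1 - normSq dy.1 / 2 - u0 * Mflux W dy ^ 2

/-- `α_T(y,Δy) = (−b + √(b² − 4 Z(y) g)) / (2 Z(y))` when the discriminant is
nonnegative, and `0` otherwise. -/
def alphaT (W : Fin ns → ℝ) (u0 : ℝ) (y dy : State d ns) : ℝ :=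
  if 0 ≤ bPert W u0 y dy ^ 2 - 4 * Z W u0 y * gPert W u0 dy then
    (-bPert W u0 y dy
        + Real.sqrt (bPert W u0 y dy ^ 2 - 4 * Z W u0 y * gPert W u0 dy)) /
      (2 * Z W u0 y)
  else 0

/-- `α*(y,Δy) = max{ max_i ΔC_i/C_i , α_T(y,Δy), 0 }`. -/
def alphaStar (W : Fin ns → ℝ) (u0 : ℝ) (y dy : State d ns) : ℝ :=
  max (⨆ i, dy.2.2 i / y.2.2 i) (max (alphaT W u0 y dy) 0)

lemma sub_mul_pos_of_div_le {x dx α t : ℝ} (hx : 0 < x) (hdx : dx / x ≤ α) (ht : 0 ≤ t)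
    (htα : t * α < 1) : 0 < x - t * dx := by
  have hdx' : dx ≤ α * x := (div_le_iff₀ hx).mp hdx
  nlinarith [mul_le_mul_of_nonneg_left hdx' ht, mul_pos (sub_pos.mpr htα) hx]

lemma add_mul_add_sq_mul_pos_of_discrim_neg {a b c : ℝ} (ha : 0 < a) (hD : discrim a b c < 0)
    (t : ℝ) : 0 < a + t * b + t ^ 2 * c := by
  have key : 4 * a * (a + t * b + t ^ 2 * c) = (2 * a + t * b) ^ 2 - discrim a b c * t ^ 2 := by
    rw [discrim]; ring
  rcases eq_or_ne t 0 with rfl | ht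
  · simpa using ha
  · have : 0 < 4 * a * (a + t * b + t ^ 2 * c) := by
      rw [key]; nlinarith [sq_nonneg (2 * a + t * b), sq_pos_of_ne_zero ht]
    exact pos_of_mul_pos_right this (by positivity)

lemma add_mul_add_sq_mul_pos_of_mul_lt {a b c t : ℝ} (ha : 0 < a) (ht : 0 ≤ t)
    (hD : 0 ≤ discrim a b c) (h : t * (-b + √(discrim a b c)) < 2 * a) :
    0 < a + t * b + t ^ 2 * c := by
  set s := √(discrim a b c)
  have hs : s ^ 2 = discrim a b c := Real.sq_sqrt hD
  have key : 4 * a * (a + t * b + t ^ 2 * c)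
      = (2 * a + t * b - t * s) * (2 * a + t * b + t * s) := by
    rw [discrim] at hs; linear_combination t ^ 2 * hs
  have hlow : 0 < 2 * a + t * b - t * s := by linarith
  have hhigh : 0 < 2 * a + t * b + t * s := by
    nlinarith [mul_nonneg ht (Real.sqrt_nonneg (discrim a b c))]
  have : 0 < 4 * a * (a + t * b + t ^ 2 * c) := key ▸ mul_pos hlow hhigh
  exact pos_of_mul_pos_right this (by positivity)

lemma mul_div_sub_lt_one {θ c α : ℝ} (hc : 0 < c) (hα : 0 ≤ α) (h : c * (1 + α) < θ) :
    0 < θ - c ∧ c / (θ - c) * α < 1 := by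
  have hΛ : 0 < θ - c := by nlinarith
  refine ⟨hΛ, ?_⟩
  rw [div_mul_eq_mul_div, div_lt_one hΛ]
  linarith

lemma div_le_alphaStar (W : Fin ns → ℝ) (u0 : ℝ) (y dy : State d ns) (i : Fin ns) :
    dy.2.2 i / y.2.2 i ≤ alphaStar W u0 y dy :=
  (le_ciSup (f := fun j => dy.2.2 j / y.2.2 j) (Finite.bddAbove_range _) i).trans
    (le_max_left _ _)

lemma alphaT_le_alphaStar (W : Fin ns → ℝ) (u0 : ℝ) (y dy : State d ns) :
    alphaT W u0 y dy ≤ alphaStar W u0 y dy :=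
  (le_max_left _ _).trans (le_max_right _ _)

lemma alphaStar_nonneg (W : Fin ns → ℝ) (u0 : ℝ) (y dy : State d ns) :
    0 ≤ alphaStar W u0 y dy :=
  (le_max_right _ _).trans (le_max_right _ _)

lemma rho_sub_smul (W : Fin ns → ℝ) (y dy : State d ns) (t : ℝ) :
    rho W (y - t • dy) = rho W y - t * Mflux W dy := by
  simp only [rho, Mflux, Finset.mul_sum, ← Finset.sum_sub_distrib]
  refine Finset.sum_congr rfl fun i _ => ?_
  simp only [Prod.snd_sub, Prod.smul_snd, Pi.sub_apply, Pi.smul_apply, smul_eq_mul]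
  ring

lemma normSq_sub_smul (a da : Fin d → ℝ) (t : ℝ) :
    normSq (a - t • da) = normSq a - 2 * t * dotP a da + t ^ 2 * normSq da := by
  simp only [normSq, dotP, Finset.mul_sum, ← Finset.sum_sub_distrib, ← Finset.sum_add_distrib]
  refine Finset.sum_congr rfl fun k _ => ?_
  simp only [Pi.sub_apply, Pi.smul_apply, smul_eq_mul]
  ring

lemma Z_sub_smul (W : Fin ns → ℝ) (u0 : ℝ) (y dy : State d ns) (t : ℝ) :
    Z W u0 (y - t • dy) = Z W u0 y + t * bPert W u0 y dy + t ^ 2 * gPert W u0 dy := by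
  simp only [Z, bPert, gPert, rho_sub_smul, Prod.fst_sub, Prod.smul_fst, normSq_sub_smul,
    Prod.snd_sub, Prod.smul_snd, smul_eq_mul]
  ring

lemma Z_sub_smul_pos (W : Fin ns → ℝ) (u0 : ℝ) (y dy : State d ns) (hZ : 0 < Z W u0 y)
    {t : ℝ} (ht : 0 ≤ t) (htα : t * alphaT W u0 y dy < 1) : 0 < Z W u0 (y - t • dy) := by
  have hdiscrim : bPert W u0 y dy ^ 2 - 4 * Z W u0 y * gPert W u0 dy
      = discrim (Z W u0 y) (bPert W u0 y dy) (gPert W u0 dy) := rfl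
  rw [Z_sub_smul]
  by_cases hD : 0 ≤ discrim (Z W u0 y) (bPert W u0 y dy) (gPert W u0 dy)
  · rw [alphaT, hdiscrim, if_pos hD, mul_div_assoc', div_lt_one (by positivity)] at htα
    exact add_mul_add_sq_mul_pos_of_mul_lt hZ ht hD htα
  · exact add_mul_add_sq_mul_pos_of_discrim_neg hZ (not_le.mp hD) t

/-- With no species the density vanishes and `Z = -|m|²/2 ≤ 0`. -/
lemma rho_pos_of_Z_pos (W : Fin ns → ℝ) (u0 : ℝ) (hW : ∀ i, 0 < W i) (y : State d ns)
    (hC : ∀ i, 0 < y.2.2 i) (hZ : 0 < Z W u0 y) : 0 < rho W y := by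
  rcases isEmpty_or_nonempty (Fin ns) with _ | _
  · have hrho : rho W y = 0 := by simp [rho]
    have hnorm : 0 ≤ normSq y.1 := Finset.sum_nonneg fun k _ => sq_nonneg (y.1 k)
    rw [Z, hrho] at hZ
    linarith
  · exact Finset.sum_pos (fun i _ => mul_pos (hW i) (hC i)) Finset.univ_nonempty

theorem modified_flux_time_step_general (W : Fin ns → ℝ) (u0 : ℝ) (hW : ∀ i, 0 < W i)
    (y dy : State d ns) (hC : ∀ i, 0 < y.2.2 i) (hZ : 0 < Z W u0 y)
    (θ c : ℝ) (hc : 0 < c)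
    (h : c * (1 + alphaStar W u0 y dy) < θ) :
    (y - (c / (θ - c)) • dy) ∈ Gset W u0 ∧
      ∀ i, 0 < (y - (c / (θ - c)) • dy).2.2 i := by
  obtain ⟨hΛ, htα⟩ := mul_div_sub_lt_one hc (alphaStar_nonneg W u0 y dy) h
  set t := c / (θ - c)
  have ht : 0 ≤ t := (div_pos hc hΛ).le
  have hCpos : ∀ i, 0 < (y - t • dy).2.2 i := fun i => by
    simpa only [Prod.snd_sub, Prod.smul_snd, Pi.sub_apply, Pi.smul_apply, smul_eq_mul] using
      sub_mul_pos_of_div_le (hC i) (div_le_alphaStar W u0 y dy i) ht htα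
  have hZpos : 0 < Z W u0 (y - t • dy) :=
    Z_sub_smul_pos W u0 y dy hZ ht
      (lt_of_le_of_lt (mul_le_mul_of_nonneg_left (alphaT_le_alphaStar W u0 y dy) ht) htα)
  exact ⟨⟨fun i => (hCpos i).le, rho_pos_of_Z_pos W u0 hW _ hCpos hZpos, hZpos⟩, hCpos⟩

/-- time-step restriction for the modified flux interpolation: if
`θ > 0`, `c > 0` and `c·(1 + α*(y,Δy)) < θ`, then `y − (c/(θ − c))·Δy ∈ 𝒢`, with
strictly positive concentration components. -/
theorem modified_flux_time_step (W : Fin ns → ℝ) (u0 : ℝ) (hW : ∀ i, 0 < W i)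
    (y dy : State d ns) (hC : ∀ i, 0 < y.2.2 i) (hZ : 0 < Z W u0 y)
    (θ c : ℝ) (hθ : 0 < θ) (hc : 0 < c)
    (h : c * (1 + alphaStar W u0 y dy) < θ) :
    (y - (c / (θ - c)) • dy) ∈ Gset W u0 ∧
      ∀ i, 0 < (y - (c / (θ - c)) • dy).2.2 i :=
  modified_flux_time_step_general W u0 hW y dy hC hZ θ c hc h

end
end PaperStmt
end
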